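/- Suppose for each t and each belief π a prescription Ξ_t(π) attains the minimum in the dynamic-programming recursion for V_t(π). Define the coordination strategy d* that, along any action history, tracks the belief via Π₁ = π₁ and Π_{t+1} = η(Π_t, Ξ_t(Π_t), u_t) and issues the prescription d*_t(u_{1:t-1}) = Ξ_t(Π_t). Then 𝒥(d*) = V₁(π₁). -/

import Mathlib

open Finset

noncomputable section

/-- Likelihood `ℓ(γ,m,u) = ∏_i γ(m^i)^{u^i} (1-γ(m^i))^{1-u^i}`. -/
def ell {n : ℕ} {M : Type} (γ : M → ℝ) (m : Fin n → M) (u : Fin n → Bool) : ℝ :=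
  ∏ i : Fin n, if u i then γ (m i) else 1 - γ (m i)

/-- `P(u|π,γ) = Σ_m π(m) ℓ(γ,m,u)`. -/
def Pout {n : ℕ} {M : Type} [Fintype M]
    (π : (Fin n → M) → ℝ) (γ : M → ℝ) (u : Fin n → Bool) : ℝ :=
  ∑ m : Fin n → M, π m * ell γ m u

open Classical in
/-- Updated belief `η(π,γ,u)(m) = π(m) ℓ(γ,m,u)/P(u|π,γ)` when `P(u|π,γ) ≠ 0`
(and `η(π,γ,u) = π` when `P(u|π,γ) = 0`, an arbitrary convention). -/
def etaUpd {n : ℕ} {M : Type} [Fintype M]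
    (π : (Fin n → M) → ℝ) (γ : M → ℝ) (u : Fin n → Bool) : (Fin n → M) → ℝ :=
  fun m => if Pout π γ u = 0 then π m else π m * ell γ m u / Pout π γ u

/-- One step of the dynamic-programming recursion: the expected current cost plus the
expected cost-to-go `W` at the updated belief,
`Σ_m Σ_u π(m) ℓ(γ,m,u) k(m,u) + Σ_u P(u|π,γ) W(η(π,γ,u))`
(any term with `P(u|π,γ) = 0` vanishes). -/
def stepVal {n : ℕ} {M : Type} [Fintype M]
    (k : (Fin n → M) → (Fin n → Bool) → ℝ)
    (W : ((Fin n → M) → ℝ) → ℝ)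
    (π : (Fin n → M) → ℝ) (γ : M → ℝ) : ℝ :=
  (∑ m : Fin n → M, ∑ u : Fin n → Bool, π m * ell γ m u * k m u) +
    ∑ u : Fin n → Bool, Pout π γ u * W (etaUpd π γ u)

/-- The set of prescriptions: maps `γ : M → [0,1]`. -/
def prescriptions (M : Type) : Set (M → ℝ) :=
  {γ | ∀ a, γ a ∈ Set.Icc (0 : ℝ) 1}

/-- The simplex of probability distributions on `𝓜^n`. -/
def simplex (n : ℕ) (M : Type) [Fintype M] : Set ((Fin n → M) → ℝ) :=
  {π | (∀ m, 0 ≤ π m) ∧ ∑ m : Fin n → M, π m = 1}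

/-- The prefix `u_{1:t-1}` of a full action sequence, at time `t`. -/
def pre {n T : ℕ} (u : Fin T → Fin n → Bool) (t : Fin T) : Fin t.1 → Fin n → Bool :=
  fun s => u ⟨s.1, s.2.trans t.2⟩

/-- Expected total cost `𝒥(d)` of a coordination strategy `d`. -/
def Jcoord {n T : ℕ} {M : Type} [Fintype M]
    (π₁ : (Fin n → M) → ℝ)
    (k : Fin T → (Fin n → M) → (Fin n → Bool) → ℝ)
    (d : ∀ t : Fin T, (Fin t.1 → Fin n → Bool) → M → ℝ) : ℝ :=
  ∑ m : Fin n → M, π₁ m *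
    ∑ u : Fin T → Fin n → Bool,
      (∏ t : Fin T, ell (d t (pre u t)) m (u t)) * (∑ t : Fin T, k t m (u t))

/-! The expected cost of a strategy splits into the cost of its first prescription plus, for each
first joint action `a`, the `P(a)`-weighted expected cost of the strategy continued after `a`,
computed under the updated belief: this is Bayes' rule applied to the path probabilities. Hence,
by induction on the horizon, a strategy issuing along every history a prescription that attains
the value at the current belief has total cost `V₀(π₁)`. -/

section Likelihood

variable {n : ℕ} {M : Type}

lemma ell_nonneg {γ : M → ℝ} (hγ : γ ∈ prescriptions M) (m : Fin n → M) (u : Fin n → Bool) :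
    0 ≤ ell γ m u :=
  prod_nonneg fun i _ => by
    obtain ⟨h0, h1⟩ := hγ (m i)
    split <;> linarith

lemma sum_ell (γ : M → ℝ) (m : Fin n → M) : ∑ u : Fin n → Bool, ell γ m u = 1 := by
  unfold ell
  rw [← Fintype.prod_sum fun (i : Fin n) (b : Bool) => if b then γ (m i) else 1 - γ (m i)]
  simp

variable [Fintype M]

lemma Pout_nonneg {π : (Fin n → M) → ℝ} (hπ : ∀ m, 0 ≤ π m) {γ : M → ℝ}
    (hγ : γ ∈ prescriptions M) (u : Fin n → Bool) : 0 ≤ Pout π γ u :=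
  sum_nonneg fun m _ => mul_nonneg (hπ m) (ell_nonneg hγ m u)

lemma etaUpd_nonneg {π : (Fin n → M) → ℝ} (hπ : ∀ m, 0 ≤ π m) {γ : M → ℝ}
    (hγ : γ ∈ prescriptions M) (u : Fin n → Bool) (m : Fin n → M) : 0 ≤ etaUpd π γ u m := by
  unfold etaUpd
  split
  · exact hπ m
  · exact div_nonneg (mul_nonneg (hπ m) (ell_nonneg hγ m u)) (Pout_nonneg hπ hγ u)

lemma sum_mul_ell_mul_eq_Pout_mul {π : (Fin n → M) → ℝ} (hπ : ∀ m, 0 ≤ π m) {γ : M → ℝ}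
    (hγ : γ ∈ prescriptions M) (u : Fin n → Bool) (f : (Fin n → M) → ℝ) :
    ∑ m, π m * ell γ m u * f m = Pout π γ u * ∑ m, etaUpd π γ u m * f m := by
  by_cases hP : Pout π γ u = 0
  · have hzero : ∀ m, π m * ell γ m u = 0 := fun m =>
      (sum_eq_zero_iff_of_nonneg fun m _ => mul_nonneg (hπ m) (ell_nonneg hγ m u)).mp hP m
        (mem_univ m)
    simp [hzero, hP]
  · rw [mul_sum]
    refine sum_congr rfl fun m _ => ?_
    rw [etaUpd, if_neg hP]
    field_simp

end Likelihood

section PathCost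

variable {n : ℕ} {M : Type}

lemma sum_fin_succ_pi_eq_sum_cons {β α : Type} [Fintype β] [AddCommMonoid α] {r : ℕ}
    (f : (Fin (r + 1) → β) → α) :
    ∑ u, f u = ∑ a, ∑ v : Fin r → β, f (Fin.cons a v) := by
  rw [← Equiv.sum_comp (Fin.consEquiv fun _ => β) f, Fintype.sum_prod_type]
  rfl

def pathProb {r : ℕ} (m : Fin n → M) (d : ∀ t : Fin r, (Fin t.1 → Fin n → Bool) → M → ℝ)
    (u : Fin r → Fin n → Bool) : ℝ :=
  ∏ t, ell (d t (pre u t)) m (u t)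

lemma pre_cons_succ {r : ℕ} (a : Fin n → Bool) (v : Fin r → Fin n → Bool) (t : Fin r) :
    pre (Fin.cons a v : Fin (r + 1) → Fin n → Bool) t.succ = Fin.cons a (pre v t) := by
  funext s
  induction s using Fin.cases <;> rfl

lemma pathProb_cons {r : ℕ} (m : Fin n → M)
    (d : ∀ t : Fin (r + 1), (Fin t.1 → Fin n → Bool) → M → ℝ)
    (a : Fin n → Bool) (v : Fin r → Fin n → Bool) :
    pathProb m d (Fin.cons a v) =
      ell (d 0 Fin.elim0) m a * pathProb m (fun t c => d t.succ (Fin.cons a c)) v := by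
  rw [pathProb, Fin.prod_univ_succ]
  congr 1
  · exact congrArg (fun γ => ell γ m a)
      (congrArg (d 0) (funext fun s => absurd s.2 (Nat.not_lt_zero s)))
  · simp only [Fin.cons_succ, pre_cons_succ]
    rfl

lemma sum_pathProb {r : ℕ} (m : Fin n → M) (d : ∀ t : Fin r, (Fin t.1 → Fin n → Bool) → M → ℝ) :
    ∑ u, pathProb m d u = 1 := by
  induction r with
  | zero => simp [pathProb]
  | succ r ih =>
    simp only [sum_fin_succ_pi_eq_sum_cons, pathProb_cons, ← mul_sum, ih, mul_one]
    exact sum_ell _ m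

def modeCost {r : ℕ} (m : Fin n → M) (k : Fin r → (Fin n → M) → (Fin n → Bool) → ℝ)
    (d : ∀ t : Fin r, (Fin t.1 → Fin n → Bool) → M → ℝ) : ℝ :=
  ∑ u, pathProb m d u * ∑ t, k t m (u t)

lemma modeCost_succ {r : ℕ} (m : Fin n → M) (k : Fin (r + 1) → (Fin n → M) → (Fin n → Bool) → ℝ)
    (d : ∀ t : Fin (r + 1), (Fin t.1 → Fin n → Bool) → M → ℝ) :
    modeCost m k d = ∑ a, ell (d 0 Fin.elim0) m a *
      (k 0 m a + modeCost m (fun t => k t.succ) (fun t c => d t.succ (Fin.cons a c))) := by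
  rw [modeCost, sum_fin_succ_pi_eq_sum_cons]
  refine sum_congr rfl fun a _ => ?_
  set d' : ∀ t : Fin r, (Fin t.1 → Fin n → Bool) → M → ℝ := fun t c => d t.succ (Fin.cons a c)
  have hsplit : ∀ v, pathProb m d (Fin.cons a v) *
      ∑ t, k t m ((Fin.cons a v : Fin (r + 1) → Fin n → Bool) t) =
      ell (d 0 Fin.elim0) m a * (pathProb m d' v * k 0 m a +
        pathProb m d' v * ∑ t, k t.succ m (v t)) := fun v => by
    rw [pathProb_cons, Fin.sum_univ_succ]
    simp only [Fin.cons_zero, Fin.cons_succ]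
    ring
  rw [sum_congr rfl fun v _ => hsplit v, ← mul_sum, sum_add_distrib, ← sum_mul, sum_pathProb,
    one_mul, modeCost]

lemma Jcoord_eq_sum_modeCost {r : ℕ} [Fintype M] (π : (Fin n → M) → ℝ)
    (k : Fin r → (Fin n → M) → (Fin n → Bool) → ℝ)
    (d : ∀ t : Fin r, (Fin t.1 → Fin n → Bool) → M → ℝ) :
    Jcoord π k d = ∑ m, π m * modeCost m k d := rfl

lemma Jcoord_succ {r : ℕ} [Fintype M] {π : (Fin n → M) → ℝ} (hπ : ∀ m, 0 ≤ π m)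
    (k : Fin (r + 1) → (Fin n → M) → (Fin n → Bool) → ℝ)
    (d : ∀ t : Fin (r + 1), (Fin t.1 → Fin n → Bool) → M → ℝ)
    (hd : d 0 Fin.elim0 ∈ prescriptions M) :
    Jcoord π k d =
      (∑ m, ∑ a, π m * ell (d 0 Fin.elim0) m a * k 0 m a) +
        ∑ a, Pout π (d 0 Fin.elim0) a *
          Jcoord (etaUpd π (d 0 Fin.elim0) a) (fun t => k t.succ)
            (fun t c => d t.succ (Fin.cons a c)) := by
  simp only [Jcoord_eq_sum_modeCost, ← sum_mul_ell_mul_eq_Pout_mul hπ hd]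
  rw [sum_comm (γ := Fin n → Bool), ← sum_add_distrib]
  simp only [modeCost_succ, mul_sum, ← sum_add_distrib, mul_add, mul_assoc]

end PathCost

section Greedy

variable {n : ℕ} {M : Type} [Fintype M]

def IsBeliefPath (Ξ : ℕ → ((Fin n → M) → ℝ) → M → ℝ) (π : (Fin n → M) → ℝ)
    (B : (t : ℕ) → (Fin t → Fin n → Bool) → (Fin n → M) → ℝ) : Prop :=
  (∀ c, B 0 c = π) ∧ ∀ (t : ℕ) (c : Fin (t + 1) → Fin n → Bool),
    B (t + 1) c =
      etaUpd (B t fun s => c s.castSucc) (Ξ t (B t fun s => c s.castSucc)) (c (Fin.last t))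

lemma cons_comp_castSucc {t : ℕ} (a : Fin n → Bool) (c : Fin (t + 1) → Fin n → Bool) :
    (fun s : Fin (t + 1) => (Fin.cons a c : Fin (t + 2) → Fin n → Bool) s.castSucc) =
      Fin.cons a fun s : Fin t => c s.castSucc := by
  funext s
  induction s using Fin.cases <;> rfl

lemma IsBeliefPath.tail {Ξ : ℕ → ((Fin n → M) → ℝ) → M → ℝ} {π : (Fin n → M) → ℝ}
    {B : (t : ℕ) → (Fin t → Fin n → Bool) → (Fin n → M) → ℝ} (hB : IsBeliefPath Ξ π B)
    (a : Fin n → Bool) :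
    IsBeliefPath (fun t => Ξ (t + 1)) (etaUpd π (Ξ 0 π) a)
      (fun t c => B (t + 1) (Fin.cons a c)) := by
  refine ⟨fun c => ?_, fun t c => ?_⟩ <;> dsimp only
  · rw [hB.2, hB.1]
    rfl
  · rw [hB.2, cons_comp_castSucc, Fin.cons_last]

theorem Jcoord_eq_of_isBeliefPath {r : ℕ} (k : Fin r → (Fin n → M) → (Fin n → Bool) → ℝ)
    (V : ℕ → ((Fin n → M) → ℝ) → ℝ) (hVr : ∀ π, V r π = 0)
    (Ξ : ℕ → ((Fin n → M) → ℝ) → M → ℝ) (hΞmem : ∀ t π, Ξ t π ∈ prescriptions M)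
    (hΞmin : ∀ t : Fin r, ∀ π, stepVal (k t) (V (t.1 + 1)) π (Ξ t.1 π) = V t.1 π)
    {π : (Fin n → M) → ℝ} (hπ : ∀ m, 0 ≤ π m)
    {B : (t : ℕ) → (Fin t → Fin n → Bool) → (Fin n → M) → ℝ} (hB : IsBeliefPath Ξ π B) :
    Jcoord π k (fun t c => Ξ t.1 (B t.1 c)) = V 0 π := by
  induction r generalizing V Ξ π B with
  | zero => simp [Jcoord, hVr]
  | succ r ih =>
    have hγ : Ξ (0 : Fin (r + 1)) (B (0 : Fin (r + 1)) Fin.elim0) = Ξ 0 π :=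
      congrArg (Ξ 0) (hB.1 _)
    have hcont : ∀ a, Jcoord (etaUpd π (Ξ 0 π) a) (fun t => k t.succ)
        (fun t c => Ξ (t.1 + 1) (B (t.1 + 1) (Fin.cons a c))) = V 1 (etaUpd π (Ξ 0 π) a) :=
      fun a => (ih (fun t => k t.succ) (fun t => V (t + 1)) hVr (fun t => Ξ (t + 1))
        (fun t => hΞmem (t + 1)) (fun t => hΞmin t.succ) (etaUpd_nonneg hπ (hΞmem 0 π) a) (hB.tail a) :)
    rw [Jcoord_succ hπ _ _ (hΞmem _ _), hγ]
    simp only [Fin.val_succ, hcont]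
    exact hΞmin 0 π

end Greedy

/-- Times are 0-indexed; `B t c` is the belief after the history `c` of length `t`. -/
theorem greedy_coordination_strategy_achieves_dp_value_general
    (n T : ℕ)
    (M : Type) [Fintype M]
    (π₁ : (Fin n → M) → ℝ) (hπ₁ : π₁ ∈ simplex n M)
    (k : Fin T → (Fin n → M) → (Fin n → Bool) → ℝ)
    (V : ℕ → ((Fin n → M) → ℝ) → ℝ)
    (hVT : ∀ π, V T π = 0)
    (Ξ : ℕ → ((Fin n → M) → ℝ) → M → ℝ)
    (hΞmem : ∀ t π, Ξ t π ∈ prescriptions M)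
    (hΞmin : ∀ t : Fin T, ∀ π, stepVal (k t) (V (t.1 + 1)) π (Ξ t.1 π) = V t.1 π)
    (B : (t : ℕ) → (Fin t → Fin n → Bool) → (Fin n → M) → ℝ)
    (hB0 : ∀ c, B 0 c = π₁)
    (hBs : ∀ (t : ℕ) (c : Fin (t + 1) → Fin n → Bool),
      B (t + 1) c =
        etaUpd (B t fun s => c s.castSucc)
          (Ξ t (B t fun s => c s.castSucc)) (c (Fin.last t))) :
    Jcoord π₁ k (fun t c => Ξ t.1 (B t.1 c)) = V 0 π₁ :=
  Jcoord_eq_of_isBeliefPath k V hVT Ξ hΞmem hΞmin hπ₁.1 ⟨hB0, hBs⟩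

/-- Suppose `Ξ_t(π)` attains the minimum in the DP recursion for `V_t(π)`, for each `t`
and each belief `π`. The coordination strategy `d*` that tracks the belief along each
action history via `Π₁ = π₁`, `Π_{t+1} = η(Π_t, Ξ_t(Π_t), u_t)` and issues
`d*_t(u_{1:t-1}) = Ξ_t(Π_t)` satisfies `𝒥(d*) = V₁(π₁)`.
(Times are 0-indexed; `B t c` is the belief after the history `c` of length `t`.) -/
theorem greedy_coordination_strategy_achieves_dp_value
    (n T : ℕ) (hn : 1 ≤ n) (hT : 1 ≤ T)
    (M : Type) [Fintype M] [Nonempty M]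
    (π₁ : (Fin n → M) → ℝ) (hπ₁ : π₁ ∈ simplex n M)
    (k : Fin T → (Fin n → M) → (Fin n → Bool) → ℝ)
    (V : ℕ → ((Fin n → M) → ℝ) → ℝ)
    (hVT : ∀ π, V T π = 0)
    (hV : ∀ t : Fin T, ∀ π, V t.1 π =
      sInf ((fun γ => stepVal (k t) (V (t.1 + 1)) π γ) '' prescriptions M))
    (Ξ : ℕ → ((Fin n → M) → ℝ) → M → ℝ)
    (hΞmem : ∀ t π, Ξ t π ∈ prescriptions M)
    (hΞmin : ∀ t : Fin T, ∀ π, stepVal (k t) (V (t.1 + 1)) π (Ξ t.1 π) = V t.1 π)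
    (B : (t : ℕ) → (Fin t → Fin n → Bool) → (Fin n → M) → ℝ)
    (hB0 : ∀ c, B 0 c = π₁)
    (hBs : ∀ (t : ℕ) (c : Fin (t + 1) → Fin n → Bool),
      B (t + 1) c =
        etaUpd (B t fun s => c s.castSucc)
          (Ξ t (B t fun s => c s.castSucc)) (c (Fin.last t))) :
    Jcoord π₁ k (fun t c => Ξ t.1 (B t.1 c)) = V 0 π₁ :=
  greedy_coordination_strategy_achieves_dp_value_general n T M π₁ hπ₁ k V hVT Ξ hΞmem hΞmin B hB0
    hBs
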